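/- Let Φ, Ψ, Υ be three orthogonal quantum Latin cubes of dimension d. Then Φ*, Ψ, Υ are also orthogonal quantum Latin cubes, where Φ* has entries conj(Φ_{i,j,k}). -/

import Mathlib

/-! Conjugation turns every inner product into its complex conjugate, so the first factor of each
product `⟨Φ,Φ'⟩⟨Ψ,Ψ'⟩⋯ = δ` is replaced by its conjugate. Where `δ = 0` some factor vanishes,
and conjugation keeps it zero; where `δ = 1` the first factor is `⟨Φ,Φ⟩`, which is real. -/

noncomputable section

/-- The inner product on a complex inner product space, as a function into `ℂ`. -/
def ip {E : Type*} [NormedAddCommGroup E] [InnerProductSpace ℂ E] (x y : E) : ℂ :=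
  inner ℂ x y

/-- A quantum Latin cube over index set `ι` with values in the Hilbert space `E`:
every line (fixing two of the three indices) is an orthonormal basis. -/
def IsQLCOn {ι : Type*} {E : Type*} [NormedAddCommGroup E] [InnerProductSpace ℂ E]
    (Φ : ι → ι → ι → E) : Prop :=
  (∀ j k, Orthonormal ℂ fun i => Φ i j k) ∧
  (∀ i k, Orthonormal ℂ fun j => Φ i j k) ∧
  (∀ i j, Orthonormal ℂ (Φ i j))

/-- For each fixed value of one of the three indices, the corresponding planes of the
two cubes form a pair of orthogonal quantum Latin squares. -/
def PlanesOrth {ι : Type*} [DecidableEq ι] {E : Type*} [NormedAddCommGroup E]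
    [InnerProductSpace ℂ E] (Φ Ψ : ι → ι → ι → E) : Prop :=
  (∀ i, ∀ j k j' k', ip (Φ i j k) (Φ i j' k') * ip (Ψ i j k) (Ψ i j' k') =
    if j = j' ∧ k = k' then 1 else 0) ∧
  (∀ j, ∀ i k i' k', ip (Φ i j k) (Φ i' j k') * ip (Ψ i j k) (Ψ i' j k') =
    if i = i' ∧ k = k' then 1 else 0) ∧
  (∀ k, ∀ i j i' j', ip (Φ i j k) (Φ i' j' k) * ip (Ψ i j k) (Ψ i' j' k) =
    if i = i' ∧ j = j' then 1 else 0)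

/-- Three quantum Latin cubes are orthogonal: (1) the triple tensor products over all
cells form an orthonormal basis of `E ⊗ E ⊗ E`, expressed via
`⟨Φ,Φ'⟩⟨Ψ,Ψ'⟩⟨Υ,Υ'⟩ = δ_{ii'}δ_{jj'}δ_{kk'}`; and (2) every pair of corresponding
planes of any two of the cubes is a pair of orthogonal quantum Latin squares. -/
def TripleOrthQLC {ι : Type*} [DecidableEq ι] {E : Type*} [NormedAddCommGroup E]
    [InnerProductSpace ℂ E] (Φ Ψ Υ : ι → ι → ι → E) : Prop :=
  (∀ i j k i' j' k',
    ip (Φ i j k) (Φ i' j' k') * ip (Ψ i j k) (Ψ i' j' k') * ip (Υ i j k) (Υ i' j' k') =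
      if i = i' ∧ j = j' ∧ k = k' then 1 else 0) ∧
  PlanesOrth Φ Ψ ∧ PlanesOrth Φ Υ ∧ PlanesOrth Ψ Υ

/-- Entrywise complex conjugation of a vector in `ℂ^d` (in the standard basis). -/
def conjE {ι : Type*} [Fintype ι] (v : EuclideanSpace ℂ ι) : EuclideanSpace ℂ ι :=
  WithLp.toLp 2 (fun k => star (v k))

theorem star_mul_eq_ite_of_mul_eq_ite {R : Type*} [Semiring R] [NoZeroDivisors R] [StarRing R]
    {a b : R} {P : Prop} [Decidable P] (h : a * b = if P then 1 else 0)
    (ha : P → star a = a) : star a * b = if P then 1 else 0 := by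
  by_cases hP : P
  · rwa [ha hP]
  · rw [if_neg hP] at h ⊢
    rcases mul_eq_zero.1 h with h | h <;> simp [h]

theorem star_ip_self {E : Type*} [NormedAddCommGroup E] [InnerProductSpace ℂ E] (x : E) :
    star (ip x x) = ip x x :=
  inner_conj_symm x x

theorem ip_conjE {κ : Type*} [Fintype κ] (u v : EuclideanSpace ℂ κ) :
    ip (conjE u) (conjE v) = star (ip u v) := by
  simp [ip, conjE, PiLp.inner_apply, star_sum, mul_comm]

theorem Orthonormal.conjE {κ ι : Type*} [Fintype κ] {f : ι → EuclideanSpace ℂ κ}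
    (hf : Orthonormal ℂ f) : Orthonormal ℂ fun i => _root_.conjE (f i) := by
  classical
  rw [orthonormal_iff_ite] at hf ⊢
  intro i j
  change ip (_root_.conjE (f i)) (_root_.conjE (f j)) = _
  rw [ip_conjE, ip, hf i j]
  split_ifs <;> simp

theorem IsQLCOn.conjE {κ ι : Type*} [Fintype κ] {Φ : ι → ι → ι → EuclideanSpace ℂ κ}
    (hΦ : IsQLCOn Φ) : IsQLCOn fun i j k => _root_.conjE (Φ i j k) :=
  ⟨fun j k => (hΦ.1 j k).conjE, fun i k => (hΦ.2.1 i k).conjE, fun i j => (hΦ.2.2 i j).conjE⟩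

section ConjLeft

variable {κ ι : Type*} [Fintype κ] [DecidableEq ι]

theorem PlanesOrth.conjE_left {Φ Ψ : ι → ι → ι → EuclideanSpace ℂ κ} (h : PlanesOrth Φ Ψ) :
    PlanesOrth (fun i j k => conjE (Φ i j k)) Ψ := by
  obtain ⟨hi, hj, hk⟩ := h
  refine ⟨fun i j k j' k' => ?_, fun j i k i' k' => ?_, fun k i j i' j' => ?_⟩ <;>
    rw [ip_conjE]
  · exact star_mul_eq_ite_of_mul_eq_ite (hi i j k j' k') (by rintro ⟨rfl, rfl⟩; apply star_ip_self)
  · exact star_mul_eq_ite_of_mul_eq_ite (hj j i k i' k') (by rintro ⟨rfl, rfl⟩; apply star_ip_self)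
  · exact star_mul_eq_ite_of_mul_eq_ite (hk k i j i' j') (by rintro ⟨rfl, rfl⟩; apply star_ip_self)

theorem TripleOrthQLC.conjE_left {Φ Ψ Υ : ι → ι → ι → EuclideanSpace ℂ κ}
    (h : TripleOrthQLC Φ Ψ Υ) : TripleOrthQLC (fun i j k => conjE (Φ i j k)) Ψ Υ := by
  obtain ⟨hcells, hΦΨ, hΦΥ, hΨΥ⟩ := h
  refine ⟨fun i j k i' j' k' => ?_, hΦΨ.conjE_left, hΦΥ.conjE_left, hΨΥ⟩
  rw [ip_conjE, mul_assoc]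
  exact star_mul_eq_ite_of_mul_eq_ite (by rw [← mul_assoc]; exact hcells i j k i' j' k')
    (by rintro ⟨rfl, rfl, rfl⟩; apply star_ip_self)

end ConjLeft

theorem conj_triple_orth_qlc_general {d : ℕ}
    (Φ Ψ Υ : Fin d → Fin d → Fin d → EuclideanSpace ℂ (Fin d))
    (hΦ : IsQLCOn Φ)
    (h : TripleOrthQLC Φ Ψ Υ) :
    IsQLCOn (fun i j k => conjE (Φ i j k)) ∧
    TripleOrthQLC (fun i j k => conjE (Φ i j k)) Ψ Υ :=
  ⟨hΦ.conjE, h.conjE_left⟩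

/-- If `Φ, Ψ, Υ` are three orthogonal quantum Latin cubes of dimension `d`, then so are
`Φ*, Ψ, Υ`, where `Φ*` has entries `conj (Φ_{i,j,k})`. -/
theorem conj_triple_orth_qlc {d : ℕ}
    (Φ Ψ Υ : Fin d → Fin d → Fin d → EuclideanSpace ℂ (Fin d))
    (hΦ : IsQLCOn Φ) (hΨ : IsQLCOn Ψ) (hΥ : IsQLCOn Υ)
    (h : TripleOrthQLC Φ Ψ Υ) :
    IsQLCOn (fun i j k => conjE (Φ i j k)) ∧
    TripleOrthQLC (fun i j k => conjE (Φ i j k)) Ψ Υ :=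
  conj_triple_orth_qlc_general Φ Ψ Υ hΦ h
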